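/- Let K be a 3DM instance on node sets of size q and σ(K) the associated spanUFP instance. If σ(K) has a feasible solution consisting of p+7q tasks (for some integer p ≥ 0), then K has a hypermatching of size at least p; concretely, the set M of hyperedges h_ℓ ∈ E such that both t_L(h_ℓ) and t_R(h_ℓ) are scheduled inside a block containing exactly 8 scheduled tasks is a hypermatching of size at least p. -/

import Mathlib

/-- `ρ = max {29, 3q}`. -/
def rho (q : ℕ) : ℕ := max 29 (3 * q)

/-- The number `x'_i = iρ + 1` associated to the node `x_i`. -/
def xnum (q i : ℕ) : ℤ := (i : ℤ) * (rho q : ℤ) + 1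

/-- The number `y'_j = jρ² + 2` associated to the node `y_j`. -/
def ynum (q j : ℕ) : ℤ := (j : ℤ) * (rho q : ℤ) ^ 2 + 2

/-- The number `z'_k = kρ³ + 4` associated to the node `z_k`. -/
def znum (q k : ℕ) : ℤ := (k : ℤ) * (rho q : ℤ) ^ 3 + 4

/-- The number `h'_ℓ = -iρ - jρ² - kρ³ - 7` associated to the hyperedge `h_ℓ = (x_i, y_j, z_k)`. -/
def hnum (q : ℕ) (h : ℕ × ℕ × ℕ) : ℤ :=
  -((h.1 : ℤ) * (rho q : ℤ)) - (h.2.1 : ℤ) * (rho q : ℤ) ^ 2 - (h.2.2 : ℤ) * (rho q : ℤ) ^ 3 - 7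

/-- The set `Q(K)` of the `3q + m` integers associated to a 3DM instance `K = (q, E)`. -/
def QK (q : ℕ) (E : Finset (ℕ × ℕ × ℕ)) : Finset ℤ :=
  ((Finset.Icc 1 q).image (xnum q)) ∪ ((Finset.Icc 1 q).image (ynum q)) ∪
    ((Finset.Icc 1 q).image (znum q)) ∪ (E.image (hnum q))

/-- `(q, E)` is a 3DM instance: every hyperedge is a triple of node indices in `{1, …, q}`
(`X`, `Y` and `Z` are identified with `{1, …, q}`). -/
def ValidE (q : ℕ) (E : Finset (ℕ × ℕ × ℕ)) : Prop :=
  ∀ h ∈ E, h.1 ∈ Finset.Icc 1 q ∧ h.2.1 ∈ Finset.Icc 1 q ∧ h.2.2 ∈ Finset.Icc 1 q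

/-- A hypermatching: no two distinct hyperedges share a node. -/
def Matching (M : Finset (ℕ × ℕ × ℕ)) : Prop :=
  ∀ h ∈ M, ∀ h' ∈ M, h ≠ h' → h.1 ≠ h'.1 ∧ h.2.1 ≠ h'.2.1 ∧ h.2.2 ≠ h'.2.2

/-- `μ = 1 + max_{u' ∈ Q(K)} 10|u'|`. -/
def mu (q : ℕ) (E : Finset (ℕ × ℕ × ℕ)) : ℕ :=
  1 + (QK q E).sup (fun u => 10 * u.natAbs)

/-- `A = 5μ + 4`. -/
def Aval (q : ℕ) (E : Finset (ℕ × ℕ × ℕ)) : ℕ := 5 * mu q E + 4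

/-- The path of `σ(K)` has `(2A+1)q - 1` edges; edges are identified with the
integers `0, 1, …, (2A+1)q - 2`. -/
def numEdges (q : ℕ) (E : Finset (ℕ × ℕ × ℕ)) : ℤ := (2 * (Aval q E : ℤ) + 1) * q - 1

/-- The capacity profile of `σ(K)`: within each block of `2A` consecutive edges, the
leftmost `A` edges have capacity `4A + 4` and the rightmost `A` edges have capacity `4A`;
blocks are separated by single edges of capacity `0`. -/
def cap (q : ℕ) (E : Finset (ℕ × ℕ × ℕ)) (e : ℤ) : ℤ :=
  let A : ℤ := (Aval q E : ℤ)
  let r := e % (2 * A + 1)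
  if r < A then 4 * A + 4 else if r < 2 * A then 4 * A else 0

/-- An element `u ∈ X ∪ Y ∪ Z ∪ E` of the 3DM instance. -/
inductive Elem where
  | X : ℕ → Elem
  | Y : ℕ → Elem
  | Z : ℕ → Elem
  | H : ℕ × ℕ × ℕ → Elem
deriving DecidableEq

/-- The number `u' ∈ Q(K)` associated to `u ∈ X ∪ Y ∪ Z ∪ E`. -/
def elemVal (q : ℕ) : Elem → ℤ
  | .X i => xnum q i
  | .Y j => ynum q j
  | .Z k => znum q k
  | .H h => hnum q h

/-- `u` is an actual element of the instance `(q, E)`. -/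
def validElem (q : ℕ) (E : Finset (ℕ × ℕ × ℕ)) : Elem → Prop
  | .X i => i ∈ Finset.Icc 1 q
  | .Y j => j ∈ Finset.Icc 1 q
  | .Z k => k ∈ Finset.Icc 1 q
  | .H h => h ∈ E

/-- A task of `σ(K)` is a pair `(u, s)` with `u ∈ X ∪ Y ∪ Z ∪ E`; `s = true` encodes the
task `t_L(u)` and `s = false` encodes the task `t_R(u)`. All tasks have weight 1. -/
abbrev UTask := Elem × Bool

/-- The length of a task: `t_L(u)` has length `A - 10u'`, `t_R(u)` has length `A + 10u'`. -/
def taskLen (q : ℕ) (E : Finset (ℕ × ℕ × ℕ)) (t : UTask) : ℤ :=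
  if t.2 then (Aval q E : ℤ) - 10 * elemVal q t.1
  else (Aval q E : ℤ) + 10 * elemVal q t.1

/-- The demand of a task: `t_L(u)` has demand `A + 10u' + 1`, `t_R(u)` has demand `A - 10u'`. -/
def taskDem (q : ℕ) (E : Finset (ℕ × ℕ × ℕ)) (t : UTask) : ℤ :=
  if t.2 then (Aval q E : ℤ) + 10 * elemVal q t.1 + 1
  else (Aval q E : ℤ) - 10 * elemVal q t.1

/-- The schedule of task `t`: the contiguous interval of `taskLen` edges starting at
edge `start t`. -/
noncomputable def sched (q : ℕ) (E : Finset (ℕ × ℕ × ℕ)) (start : UTask → ℤ) (t : UTask) : Finset ℤ :=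
  Finset.Ico (start t) (start t + taskLen q E t)

/-- `(S, start)` is a feasible solution of `σ(K)`: every selected task is a task of the
instance, is scheduled (contiguously, with exactly its length) within the path, and on every
edge `e` the total demand of the selected tasks whose schedule contains `e` is at most the
capacity of `e`. -/
def Feasible (q : ℕ) (E : Finset (ℕ × ℕ × ℕ)) (S : Finset UTask) (start : UTask → ℤ) : Prop :=
  (∀ t ∈ S, validElem q E t.1) ∧
  (∀ t ∈ S, 0 ≤ start t ∧ start t + taskLen q E t ≤ numEdges q E) ∧
  (∀ e : ℤ, 0 ≤ e → e < numEdges q E →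
    ∑ t ∈ S.filter (fun t => e ∈ sched q E start t), taskDem q E t ≤ cap q E e)

/-- The first edge of the `b`-th block (`b ∈ {0, …, q-1}`). -/
def blockStart (q : ℕ) (E : Finset (ℕ × ℕ × ℕ)) (b : ℕ) : ℤ :=
  (b : ℤ) * (2 * (Aval q E : ℤ) + 1)

/-- The `b`-th block of `2A` consecutive edges (`b ∈ {0, …, q-1}`). -/
noncomputable def block (q : ℕ) (E : Finset (ℕ × ℕ × ℕ)) (b : ℕ) : Finset ℤ :=
  Finset.Ico (blockStart q E b) (blockStart q E b + 2 * (Aval q E : ℤ))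

/-!
A scheduled task cannot cross a separator edge of capacity `0`, so it lies in one block. Every
demand exceeds `(4A + 4) / 5`, so at most four tasks share an edge, while every task of a block runs
over one of its edges `B + A - μ` and `B + A + μ - 1`: a block holds at most eight tasks, and
`p + 7q` tasks fill at least `p` blocks with exactly eight.

Write a task's length as `A - 10ν` and its demand as `A + 10ν + c`, where `ν = ±u'` and `c = 1`
exactly for `t_L`. In a block with eight tasks, four run over `B + A - μ` and four over
`B + A + μ - 1`; the capacities `4A + 4` and `4A` there make both sums of `ν` nonpositive, while the
total length `8A - 10 Σ ν` is at most `4 · 2A`. Hence both sums vanish, the right four are tasks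
`t_R`, and every edge is covered exactly four times: the left four start at `B`, the right four end
at `B + 2A`, and their lengths pair up to `2A`. As no two numbers of `Q(K)` are opposite and
distinct elements have distinct numbers, the left four are `t_L(u)` and the right four `t_R(u)` for
four elements `u` with `Σ u' = 0`. Reading this sum in base `ρ` shows that they are a hyperedge and
its three nodes. Different full blocks hold disjoint sets of nodes, so their hyperedges form a
hypermatching.
-/

open Finset

lemma eq_zero_of_add_mul_eq_zero {r c d : ℤ} (h : c + d * r = 0) (hc : |c| < r) :
    c = 0 ∧ d = 0 := by
  have hc0 : c = 0 := Int.eq_zero_of_abs_lt_dvd ⟨-d, by linarith⟩ hc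
  have hr : r ≠ 0 := ((abs_nonneg c).trans_lt hc).ne'
  exact ⟨hc0, by simpa [hc0, hr] using h⟩

/-- Sweeping from `y - 1` to `y` past the right ends `f a` and the left ends `g b` of two families
of intervals: if the number of intervals covering the point does not change, some interval of the
second family starts where one of the first family ends. -/
lemma exists_eq_of_card_filter_eq {α β : Type*} {P : Finset α} {R : Finset β} {f : α → ℤ}
    {g : β → ℤ} {y : ℤ}
    (h : #{a ∈ P | y - 1 < f a} + #{b ∈ R | g b ≤ y - 1} =
      #{a ∈ P | y < f a} + #{b ∈ R | g b ≤ y})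
    {a : α} (ha : a ∈ P) (hfa : f a = y) : ∃ b ∈ R, g b = y := by
  have hP : #{a ∈ P | y - 1 < f a} = #{a ∈ P | y < f a} + #{a ∈ P | f a = y} := by
    simp only [card_filter, ← sum_add_distrib]
    exact sum_congr rfl fun a _ => by split_ifs <;> omega
  have hR : #{b ∈ R | g b ≤ y} = #{b ∈ R | g b ≤ y - 1} + #{b ∈ R | g b = y} := by
    simp only [card_filter, ← sum_add_distrib]
    exact sum_congr rfl fun b _ => by split_ifs <;> omega
  have : 0 < #{a ∈ P | f a = y} := card_pos.mpr ⟨a, mem_filter.mpr ⟨ha, hfa⟩⟩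
  obtain ⟨b, hb⟩ := card_pos.mp (show 0 < #{b ∈ R | g b = y} by omega)
  exact ⟨b, mem_filter.mp hb⟩

lemma sum_le_mul_card_add_card_filter_eq {ι : Type*} {s : Finset ι} {f : ι → ℕ} {n : ℕ}
    (hf : ∀ i ∈ s, f i ≤ n + 1) : ∑ i ∈ s, f i ≤ n * #s + #{i ∈ s | f i = n + 1} := by
  rw [card_filter, mul_comm, ← smul_eq_mul, ← sum_const, ← sum_add_distrib]
  exact sum_le_sum fun i hi => by have := hf i hi; split_ifs <;> omega

section Numbers

variable {q : ℕ}

lemma twenty_nine_le_rho (q : ℕ) : (29 : ℤ) ≤ rho q := by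
  have : 29 ≤ rho q := le_max_left _ _
  omega

lemma three_mul_le_rho (q : ℕ) : 3 * (q : ℤ) ≤ rho q := by
  have : 3 * q ≤ rho q := le_max_right _ _
  omega

lemma rho_pos (q : ℕ) : (0 : ℤ) < rho q := by
  linarith [twenty_nine_le_rho q]

def lowDigit : Elem → ℤ
  | .X _ => 1
  | .Y _ => 2
  | .Z _ => 4
  | .H _ => -7

lemma abs_lowDigit_le (u : Elem) : |lowDigit u| ≤ 7 := by
  cases u <;> simp [lowDigit]

lemma rho_dvd_elemVal_sub_lowDigit (q : ℕ) (u : Elem) :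
    (rho q : ℤ) ∣ elemVal q u - lowDigit u := by
  cases u with
  | X i => exact ⟨i, by simp [elemVal, xnum, lowDigit]; ring⟩
  | Y j => exact ⟨(j : ℤ) * rho q, by simp [elemVal, ynum, lowDigit]; ring⟩
  | Z k => exact ⟨(k : ℤ) * rho q ^ 2, by simp [elemVal, znum, lowDigit]; ring⟩
  | H h =>
    exact ⟨-(h.1 : ℤ) - h.2.1 * rho q - h.2.2 * rho q ^ 2, by simp [elemVal, hnum, lowDigit]; ring⟩

lemma elemVal_add_elemVal_ne_zero (q : ℕ) (u v : Elem) : elemVal q u + elemVal q v ≠ 0 := by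
  intro h
  have hdvd : (rho q : ℤ) ∣ lowDigit u + lowDigit v := by
    have := dvd_add (rho_dvd_elemVal_sub_lowDigit q u) (rho_dvd_elemVal_sub_lowDigit q v)
    rwa [show elemVal q u - lowDigit u + (elemVal q v - lowDigit v) = -(lowDigit u + lowDigit v)
      by linarith, dvd_neg] at this
  have hlt : |lowDigit u + lowDigit v| < rho q := by
    linarith [abs_add_le (lowDigit u) (lowDigit v), abs_lowDigit_le u, abs_lowDigit_le v,
      twenty_nine_le_rho q]
  have := Int.eq_zero_of_abs_lt_dvd hdvd hlt
  cases u <;> cases v <;> simp [lowDigit] at this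

lemma abs_sub_lt_rho {a b : ℕ} (ha : a ∈ Icc 1 q) (hb : b ∈ Icc 1 q) :
    |(a : ℤ) - b| < rho q := by
  have := three_mul_le_rho q
  rw [mem_Icc] at ha hb
  rw [abs_lt]
  omega

lemma hnum_injOn (q : ℕ) : Set.InjOn (hnum q) ↑(Icc 1 q ×ˢ Icc 1 q ×ˢ Icc 1 q) := by
  rintro ⟨a, b, c⟩ habc ⟨a', b', c'⟩ habc' heq
  simp only [coe_product, Set.mem_prod, mem_coe] at habc habc'
  set r : ℤ := (rho q : ℤ)
  have hdigits : ((a : ℤ) - a') + (((b : ℤ) - b') + ((c : ℤ) - c') * r) * r = 0 := by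
    have : r * (((a : ℤ) - a') + (((b : ℤ) - b') + ((c : ℤ) - c') * r) * r) = 0 := by
      simp only [hnum] at heq; linear_combination -heq
    exact (mul_eq_zero.mp this).resolve_left (rho_pos q).ne'
  obtain ⟨ha, hbc⟩ := eq_zero_of_add_mul_eq_zero hdigits (abs_sub_lt_rho habc.1 habc'.1)
  obtain ⟨hb, hc⟩ := eq_zero_of_add_mul_eq_zero hbc (abs_sub_lt_rho habc.2.1 habc'.2.1)
  simp only [Prod.mk.injEq]
  omega

lemma elemVal_injOn {E : Finset (ℕ × ℕ × ℕ)} (hE : ValidE q E) :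
    Set.InjOn (elemVal q) {u | validElem q E u} := by
  intro u hu v hv heq
  have hdvd : (rho q : ℤ) ∣ lowDigit u - lowDigit v := by
    have := dvd_sub (rho_dvd_elemVal_sub_lowDigit q v) (rho_dvd_elemVal_sub_lowDigit q u)
    rwa [show elemVal q v - lowDigit v - (elemVal q u - lowDigit u) = lowDigit u - lowDigit v
      by rw [heq]; ring] at this
  have hlt : |lowDigit u - lowDigit v| < rho q := by
    linarith [abs_sub (lowDigit u) (lowDigit v), abs_lowDigit_le u, abs_lowDigit_le v,
      twenty_nine_le_rho q]
  have hlow := Int.eq_zero_of_abs_lt_dvd hdvd hlt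
  have hr := (rho_pos q).ne'
  cases u <;> cases v <;> simp [lowDigit] at hlow <;>
    simp_all [elemVal, validElem, xnum, ynum, znum]
  exact hnum_injOn q (by simpa only [coe_product, Set.mem_prod, mem_coe] using hE _ hu)
    (by simpa only [coe_product, Set.mem_prod, mem_coe] using hE _ hv) heq

def hyperedgeElems (h : ℕ × ℕ × ℕ) : Finset Elem := {.X h.1, .Y h.2.1, .Z h.2.2, .H h}

lemma sum_lowDigit_eq_zero {Q : Finset Elem} (hQ : #Q ≤ 4)
    (hsum : ∑ u ∈ Q, elemVal q u = 0) : ∑ u ∈ Q, lowDigit u = 0 := by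
  have hdvd : (rho q : ℤ) ∣ ∑ u ∈ Q, lowDigit u := by
    have := dvd_sum fun u (_ : u ∈ Q) => rho_dvd_elemVal_sub_lowDigit q u
    rwa [sum_sub_distrib, hsum, zero_sub, dvd_neg] at this
  refine Int.eq_zero_of_abs_lt_dvd hdvd ?_
  calc |∑ u ∈ Q, lowDigit u| ≤ ∑ u ∈ Q, |lowDigit u| := abs_sum_le_sum_abs _ _
    _ ≤ #Q • 7 := sum_le_card_nsmul _ _ _ fun u _ => abs_lowDigit_le u
    _ < rho q := by have := twenty_nine_le_rho q; simp only [nsmul_eq_mul]; omega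

/-- Four digits from `{1, 2, 4, -7}` can only sum to zero as `1 + 2 + 4 - 7`. -/
lemma exists_lowDigit_eq_of_sum_eq_zero {Q : Finset Elem} (hQ : #Q = 4)
    (hlow : ∑ u ∈ Q, lowDigit u = 0) {v : ℤ} (hv : v ∈ ({1, 2, 4, -7} : Finset ℤ)) :
    ∃ u ∈ Q, lowDigit u = v := by
  have hmaps : ∀ u ∈ Q, lowDigit u ∈ ({1, 2, 4, -7} : Finset ℤ) := by
    intro u _; cases u <;> simp [lowDigit]
  have hfiber (w : ℤ) :
      ∑ u ∈ Q with lowDigit u = w, lowDigit u = #{u ∈ Q | lowDigit u = w} * w := by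
    rw [sum_eq_card_nsmul fun u hu => (mem_filter.mp hu).2, nsmul_eq_mul]
  have hcard := card_eq_sum_card_fiberwise hmaps
  rw [← sum_fiberwise_of_maps_to hmaps] at hlow
  simp [hfiber] at hcard hlow hv
  have : 0 < #{u ∈ Q | lowDigit u = v} := by rcases hv with rfl | rfl | rfl | rfl <;> omega
  obtain ⟨u, hu⟩ := card_pos.mp this
  exact ⟨u, mem_filter.mp hu⟩

lemma exists_eq_hyperedgeElems {E : Finset (ℕ × ℕ × ℕ)} (hE : ValidE q E) {Q : Finset Elem}
    (hQ : #Q = 4) (hval : ∀ u ∈ Q, validElem q E u) (hsum : ∑ u ∈ Q, elemVal q u = 0) :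
    ∃ h ∈ E, Q = hyperedgeElems h := by
  have hlow := sum_lowDigit_eq_zero hQ.le hsum
  obtain ⟨x, hx, hx1⟩ := exists_lowDigit_eq_of_sum_eq_zero hQ hlow (v := 1) (by simp)
  obtain ⟨y, hy, hy2⟩ := exists_lowDigit_eq_of_sum_eq_zero hQ hlow (v := 2) (by simp)
  obtain ⟨z, hz, hz4⟩ := exists_lowDigit_eq_of_sum_eq_zero hQ hlow (v := 4) (by simp)
  obtain ⟨w, hw, hw7⟩ := exists_lowDigit_eq_of_sum_eq_zero hQ hlow (v := -7) (by simp)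
  obtain ⟨i, rfl⟩ : ∃ i, x = .X i := by cases x <;> simp [lowDigit] at hx1 ⊢
  obtain ⟨j, rfl⟩ : ∃ j, y = .Y j := by cases y <;> simp [lowDigit] at hy2 ⊢
  obtain ⟨k, rfl⟩ : ∃ k, z = .Z k := by cases z <;> simp [lowDigit] at hz4 ⊢
  obtain ⟨h, rfl⟩ : ∃ h, w = .H h := by cases w <;> simp [lowDigit] at hw7 ⊢
  have hQeq : Q = {.X i, .Y j, .Z k, .H h} := by
    refine (eq_of_subset_of_card_le ?_ (by rw [hQ]; simp)).symm
    simp [insert_subset_iff, hx, hy, hz, hw]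
  have hijk : (i, j, k) ∈ Icc 1 q ×ˢ Icc 1 q ×ˢ Icc 1 q :=
    mem_product.mpr ⟨hval _ hx, mem_product.mpr ⟨hval _ hy, hval _ hz⟩⟩
  have hh : h = (i, j, k) := by
    refine hnum_injOn q
      (by simpa only [coe_product, Set.mem_prod, mem_coe] using hE _ (hval _ hw)) hijk ?_
    rw [hQeq] at hsum
    simp [sum_insert, elemVal, xnum, ynum, znum, hnum] at hsum ⊢
    linarith
  subst hh
  exact ⟨_, hval _ hw, hQeq⟩

end Numbers

section Tasks

variable {q : ℕ} {E : Finset (ℕ × ℕ × ℕ)}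

def taskVal (q : ℕ) (t : UTask) : ℤ := if t.2 then elemVal q t.1 else -elemVal q t.1

lemma taskLen_eq (t : UTask) : taskLen q E t = Aval q E - 10 * taskVal q t := by
  unfold taskLen taskVal; split_ifs <;> ring

lemma taskDem_eq (t : UTask) :
    taskDem q E t = Aval q E + 10 * taskVal q t + t.2.toNat := by
  unfold taskDem taskVal; cases t.2 <;> simp; ring

lemma sum_taskLen (F : Finset UTask) :
    ∑ t ∈ F, taskLen q E t = #F * Aval q E - 10 * ∑ t ∈ F, taskVal q t := by
  simp [taskLen_eq, sum_sub_distrib, mul_sum]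

lemma sum_taskDem (F : Finset UTask) :
    ∑ t ∈ F, taskDem q E t =
      #F * Aval q E + 10 * ∑ t ∈ F, taskVal q t + ∑ t ∈ F, (t.2.toNat : ℤ) := by
  simp [taskDem_eq, sum_add_distrib, mul_sum]

lemma Aval_eq : (Aval q E : ℤ) = 5 * mu q E + 4 := by
  simp [Aval]

lemma one_le_mu : (1 : ℤ) ≤ mu q E := by
  simp [mu]

lemma elemVal_mem_QK {u : Elem} (hu : validElem q E u) : elemVal q u ∈ QK q E := by
  simp only [QK, mem_union]
  cases u with
  | X i => exact .inl (.inl (.inl (mem_image_of_mem _ hu)))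
  | Y j => exact .inl (.inl (.inr (mem_image_of_mem _ hu)))
  | Z k => exact .inl (.inr (mem_image_of_mem _ hu))
  | H h => exact .inr (mem_image_of_mem _ hu)

lemma abs_taskVal_lt {t : UTask} (ht : validElem q E t.1) : 10 * |taskVal q t| < mu q E := by
  have hle : 10 * (elemVal q t.1).natAbs ≤ (QK q E).sup fun u => 10 * u.natAbs :=
    le_sup (f := fun u : ℤ => 10 * u.natAbs) (elemVal_mem_QK ht)
  have habs : |taskVal q t| = (elemVal q t.1).natAbs := by
    unfold taskVal; split_ifs <;> simp
  rw [habs, mu]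
  omega

lemma taskLen_mem_Ioo {t : UTask} (ht : validElem q E t.1) :
    (Aval q E : ℤ) - mu q E < taskLen q E t ∧ taskLen q E t < (Aval q E : ℤ) + mu q E := by
  have := abs_lt.mp (abs_mul (10 : ℤ) (taskVal q t) ▸ abs_taskVal_lt ht)
  rw [taskLen_eq]
  constructor <;> linarith

lemma Aval_sub_mu_lt_taskDem {t : UTask} (ht : validElem q E t.1) :
    (Aval q E : ℤ) - mu q E < taskDem q E t := by
  have := abs_lt.mp (abs_mul (10 : ℤ) (taskVal q t) ▸ abs_taskVal_lt ht)
  rw [taskDem_eq]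
  linarith [Int.natCast_nonneg t.2.toNat]

lemma taskDem_pos {t : UTask} (ht : validElem q E t.1) : 0 < taskDem q E t := by
  have := Aval_sub_mu_lt_taskDem ht
  have := Aval_eq (q := q) (E := E)
  linarith

end Tasks

section Block

variable {q : ℕ} {E : Finset (ℕ × ℕ × ℕ)} {start : UTask → ℤ} {T : Finset UTask} {B : ℤ}

noncomputable def tasksThrough (q : ℕ) (E : Finset (ℕ × ℕ × ℕ)) (start : UTask → ℤ)
    (T : Finset UTask) (e : ℤ) : Finset UTask :=
  {t ∈ T | e ∈ sched q E start t}

structure BlockFeasible (q : ℕ) (E : Finset (ℕ × ℕ × ℕ)) (start : UTask → ℤ)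
    (T : Finset UTask) (B : ℤ) : Prop where
  valid : ∀ t ∈ T, validElem q E t.1
  sched_subset : ∀ t ∈ T, sched q E start t ⊆ Ico B (B + 2 * Aval q E)
  load_le : ∀ e ∈ Ico B (B + 2 * Aval q E),
    ∑ t ∈ tasksThrough q E start T e, taskDem q E t ≤
      if e < B + Aval q E then 4 * (Aval q E : ℤ) + 4 else 4 * (Aval q E : ℤ)

/-- Tasks are longer than `A - μ` and shorter than `A + μ`, so every task of a block runs over
the edge `B + A - μ` or the edge `B + A + μ - 1`. -/
noncomputable abbrev leftTasks (q : ℕ) (E : Finset (ℕ × ℕ × ℕ)) (start : UTask → ℤ)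
    (T : Finset UTask) (B : ℤ) : Finset UTask :=
  tasksThrough q E start T (B + Aval q E - mu q E)

noncomputable abbrev rightTasks (q : ℕ) (E : Finset (ℕ × ℕ × ℕ)) (start : UTask → ℤ)
    (T : Finset UTask) (B : ℤ) : Finset UTask :=
  tasksThrough q E start T (B + Aval q E + mu q E - 1)

namespace BlockFeasible

lemma le_start_and_end_le (hT : BlockFeasible q E start T B) {t : UTask} (ht : t ∈ T) :
    B ≤ start t ∧ start t + taskLen q E t ≤ B + 2 * Aval q E := by
  have hlen := (taskLen_mem_Ioo (hT.valid t ht)).1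
  have := Aval_eq (q := q) (E := E)
  exact (Ico_subset_Ico_iff (by linarith)).mp (hT.sched_subset t ht)

lemma card_tasksThrough_le_four (hT : BlockFeasible q E start T B) {e : ℤ}
    (he : e ∈ Ico B (B + 2 * Aval q E)) : #(tasksThrough q E start T e) ≤ 4 := by
  have hdem : #(tasksThrough q E start T e) • ((Aval q E : ℤ) - mu q E + 1) ≤
      ∑ t ∈ tasksThrough q E start T e, taskDem q E t :=
    card_nsmul_le_sum _ _ _ fun t ht =>
      Int.add_one_le_iff.mpr (Aval_sub_mu_lt_taskDem (hT.valid t (mem_filter.mp ht).1))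
  have hload : ∑ t ∈ tasksThrough q E start T e, taskDem q E t ≤ 4 * Aval q E + 4 := by
    refine (hT.load_le e he).trans ?_
    split_ifs <;> linarith
  rw [nsmul_eq_mul, Aval_eq] at hdem
  rw [Aval_eq] at hload
  have := one_le_mu (q := q) (E := E)
  by_contra! h5
  have h5' : (5 : ℤ) ≤ #(tasksThrough q E start T e) := by exact_mod_cast h5
  nlinarith

lemma mem_leftTasks_or_mem_rightTasks (hT : BlockFeasible q E start T B) {t : UTask} (ht : t ∈ T) :
    t ∈ leftTasks q E start T B ∨
      t ∈ rightTasks q E start T B := by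
  have hlen := taskLen_mem_Ioo (hT.valid t ht)
  have hpos := hT.le_start_and_end_le ht
  have := Aval_eq (q := q) (E := E)
  simp only [tasksThrough, mem_filter, sched, mem_Ico, ht, true_and]
  by_cases hs : start t ≤ B + Aval q E - mu q E
  · left; constructor <;> linarith
  · right; constructor <;> linarith

lemma leftTasks_union_rightTasks (hT : BlockFeasible q E start T B) :
    leftTasks q E start T B ∪ rightTasks q E start T B = T :=
  (union_subset (filter_subset _ _) (filter_subset _ _)).antisymm
    fun _ ht => mem_union.mpr (hT.mem_leftTasks_or_mem_rightTasks ht)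

lemma card_leftTasks_le (hT : BlockFeasible q E start T B) : #(leftTasks q E start T B) ≤ 4 := by
  have := one_le_mu (q := q) (E := E)
  have := Aval_eq (q := q) (E := E)
  exact hT.card_tasksThrough_le_four (mem_Ico.mpr ⟨by linarith, by linarith⟩)

lemma card_rightTasks_le (hT : BlockFeasible q E start T B) :
    #(rightTasks q E start T B) ≤ 4 := by
  have := one_le_mu (q := q) (E := E)
  have := Aval_eq (q := q) (E := E)
  exact hT.card_tasksThrough_le_four (mem_Ico.mpr ⟨by linarith, by linarith⟩)

lemma card_le_eight (hT : BlockFeasible q E start T B) : #T ≤ 8 := by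
  rw [← hT.leftTasks_union_rightTasks]
  linarith [card_union_le (leftTasks q E start T B) (rightTasks q E start T B),
    hT.card_leftTasks_le, hT.card_rightTasks_le]

lemma sum_taskLen_eq (hT : BlockFeasible q E start T B) :
    ∑ t ∈ T, taskLen q E t =
      ∑ e ∈ Ico B (B + 2 * Aval q E), (#(tasksThrough q E start T e) : ℤ) := by
  have hlen (t : UTask) (ht : t ∈ T) : taskLen q E t =
      #((Ico B (B + 2 * Aval q E)).bipartiteAbove (fun t e => e ∈ sched q E start t) t) := by
    rw [bipartiteAbove, filter_mem_eq_inter, inter_eq_right.mpr (hT.sched_subset t ht), sched,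
      Int.card_Ico, add_sub_cancel_left, Int.toNat_of_nonneg]
    have := (taskLen_mem_Ioo (hT.valid t ht)).1
    have := Aval_eq (q := q) (E := E)
    linarith
  rw [sum_congr rfl hlen]
  exact_mod_cast sum_card_bipartiteAbove_eq_sum_card_bipartiteBelow _

lemma sum_taskLen_le (hT : BlockFeasible q E start T B) :
    ∑ t ∈ T, taskLen q E t ≤ 8 * Aval q E := by
  rw [hT.sum_taskLen_eq]
  calc ∑ e ∈ Ico B (B + 2 * Aval q E), (#(tasksThrough q E start T e) : ℤ)
      ≤ ∑ e ∈ Ico B (B + 2 * Aval q E), (4 : ℤ) :=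
        sum_le_sum fun e he => by exact_mod_cast hT.card_tasksThrough_le_four he
    _ = 8 * Aval q E := by simp; ring

lemma card_tasksThrough_eq_four (hT : BlockFeasible q E start T B)
    (hlen : ∑ t ∈ T, taskLen q E t = 8 * Aval q E) {e : ℤ} (he : e ∈ Ico B (B + 2 * Aval q E)) :
    #(tasksThrough q E start T e) = 4 := by
  have hsum : ∑ e ∈ Ico B (B + 2 * Aval q E), (#(tasksThrough q E start T e) : ℤ) =
      ∑ e ∈ Ico B (B + 2 * Aval q E), (4 : ℤ) := by
    rw [← hT.sum_taskLen_eq, hlen]; simp; ring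
  have := (sum_eq_sum_iff_of_le fun e he => by
    exact_mod_cast hT.card_tasksThrough_le_four he).mp hsum e he
  exact_mod_cast this

lemma disjoint_and_card_eq_four (hT : BlockFeasible q E start T B) (h8 : #T = 8) :
    Disjoint (leftTasks q E start T B) (rightTasks q E start T B) ∧
      #(leftTasks q E start T B) = 4 ∧ #(rightTasks q E start T B) = 4 := by
  have hcard := card_union_add_card_inter (leftTasks q E start T B) (rightTasks q E start T B)
  rw [hT.leftTasks_union_rightTasks, h8] at hcard
  have := hT.card_leftTasks_le
  have := hT.card_rightTasks_le
  exact ⟨disjoint_iff_inter_eq_empty.mpr (card_eq_zero.mp (by omega)), by omega, by omega⟩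

lemma tight_of_card_eq_eight (hT : BlockFeasible q E start T B) (h8 : #T = 8) :
    ∑ t ∈ T, taskLen q E t = 8 * Aval q E ∧
      ∑ t ∈ leftTasks q E start T B, taskVal q t = 0 ∧
      ∀ t ∈ rightTasks q E start T B, t.2 = false := by
  have := one_le_mu (q := q) (E := E)
  have := Aval_eq (q := q) (E := E)
  have hunion := hT.leftTasks_union_rightTasks
  obtain ⟨hdisj, hP, hR⟩ := hT.disjoint_and_card_eq_four h8
  set P := leftTasks q E start T B
  set R := rightTasks q E start T B
  have hloadP : ∑ t ∈ P, taskDem q E t ≤ 4 * Aval q E + 4 := by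
    have := hT.load_le (B + Aval q E - mu q E) (mem_Ico.mpr ⟨by linarith, by linarith⟩)
    rwa [if_pos (by linarith)] at this
  have hloadR : ∑ t ∈ R, taskDem q E t ≤ 4 * Aval q E := by
    have := hT.load_le (B + Aval q E + mu q E - 1) (mem_Ico.mpr ⟨by linarith, by linarith⟩)
    rwa [if_neg (by linarith)] at this
  rw [sum_taskDem, hP] at hloadP
  rw [sum_taskDem, hR] at hloadR
  have hlen := hT.sum_taskLen_le
  rw [← hunion, sum_union hdisj, sum_taskLen, sum_taskLen, hP, hR] at hlen
  have haP : 0 ≤ ∑ t ∈ P, (t.2.toNat : ℤ) := sum_nonneg fun _ _ => Int.natCast_nonneg _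
  have haR : 0 ≤ ∑ t ∈ R, (t.2.toNat : ℤ) := sum_nonneg fun _ _ => Int.natCast_nonneg _
  push_cast at hloadP hloadR hlen
  -- the loads give `Σ_P ν ≤ 0` and `Σ_R ν ≤ 0`, the total length `Σ_P ν + Σ_R ν ≥ 0`
  have hNP : ∑ t ∈ P, taskVal q t = 0 := by omega
  have hNR : ∑ t ∈ R, taskVal q t = 0 := by omega
  have haR0 : ∑ t ∈ R, (t.2.toNat : ℤ) = 0 := by omega
  refine ⟨?_, hNP, fun t ht => ?_⟩
  · rw [← hunion, sum_union hdisj, sum_taskLen, sum_taskLen, hP, hR, hNP, hNR]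
    push_cast; ring
  · simpa using (sum_eq_zero_iff_of_nonneg fun _ _ => Int.natCast_nonneg _).mp haR0 t ht

/-- The four tasks over the first edge of the block are exactly those over `B + A - μ`. -/
lemma start_eq_of_mem_leftTasks (hT : BlockFeasible q E start T B) (h8 : #T = 8) {p : UTask}
    (hp : p ∈ leftTasks q E start T B) : start p = B := by
  have := one_le_mu (q := q) (E := E)
  have := Aval_eq (q := q) (E := E)
  have hfirst : #(tasksThrough q E start T B) = 4 :=
    hT.card_tasksThrough_eq_four (hT.tight_of_card_eq_eight h8).1
      (mem_Ico.mpr ⟨le_rfl, by linarith⟩)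
  have hsub : tasksThrough q E start T B ⊆ leftTasks q E start T B := by
    intro t ht
    simp only [tasksThrough, sched, mem_filter, mem_Ico] at ht ⊢
    have := hT.le_start_and_end_le ht.1
    have := (taskLen_mem_Ioo (hT.valid t ht.1)).1
    exact ⟨ht.1, by linarith, by linarith⟩
  rw [← eq_of_subset_of_card_le hsub
    (by rw [hfirst, (hT.disjoint_and_card_eq_four h8).2.1])] at hp
  simp only [tasksThrough, sched, mem_filter, mem_Ico] at hp
  linarith [hT.le_start_and_end_le hp.1]

/-- The four tasks over the last edge of the block are exactly those over `B + A + μ - 1`. -/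
lemma end_eq_of_mem_rightTasks (hT : BlockFeasible q E start T B) (h8 : #T = 8) {r : UTask}
    (hr : r ∈ rightTasks q E start T B) :
    start r + taskLen q E r = B + 2 * Aval q E := by
  have := one_le_mu (q := q) (E := E)
  have := Aval_eq (q := q) (E := E)
  have hlast : #(tasksThrough q E start T (B + 2 * Aval q E - 1)) = 4 :=
    hT.card_tasksThrough_eq_four (hT.tight_of_card_eq_eight h8).1
      (mem_Ico.mpr ⟨by linarith, by linarith⟩)
  have hsub : tasksThrough q E start T (B + 2 * Aval q E - 1) ⊆
      rightTasks q E start T B := by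
    intro t ht
    simp only [tasksThrough, sched, mem_filter, mem_Ico] at ht ⊢
    have := hT.le_start_and_end_le ht.1
    have := taskLen_mem_Ioo (hT.valid t ht.1)
    exact ⟨ht.1, by linarith, by linarith⟩
  rw [← eq_of_subset_of_card_le hsub
    (by rw [hlast, (hT.disjoint_and_card_eq_four h8).2.2])] at hr
  simp only [tasksThrough, sched, mem_filter, mem_Ico] at hr
  linarith [hT.le_start_and_end_le hr.1]

lemma card_tasksThrough_eq (hT : BlockFeasible q E start T B) (h8 : #T = 8) {y : ℤ}
    (hy : y ∈ Ico B (B + 2 * Aval q E)) :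
    #(tasksThrough q E start T y) =
      #{p ∈ leftTasks q E start T B | y < B + taskLen q E p} +
      #{r ∈ rightTasks q E start T B | start r ≤ y} := by
  have hunion := hT.leftTasks_union_rightTasks
  have hdisj := (hT.disjoint_and_card_eq_four h8).1
  rw [mem_Ico] at hy
  conv_lhs => rw [tasksThrough, ← hunion, filter_union]
  rw [card_union_of_disjoint (disjoint_filter_filter hdisj)]
  congr 2
  · refine filter_congr fun p hp => ?_
    rw [sched, mem_Ico, hT.start_eq_of_mem_leftTasks h8 hp]
    constructor <;> intro h <;> [exact h.2; exact ⟨hy.1, h⟩]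
  · refine filter_congr fun r hr => ?_
    rw [sched, mem_Ico, hT.end_eq_of_mem_rightTasks h8 hr]
    constructor <;> intro h <;> [exact h.1; exact ⟨h, hy.2⟩]

/-- The coverage is four on both sides of the end of `p`, so a right task starts there. -/
lemma exists_mem_rightTasks_taskLen_add_eq (hT : BlockFeasible q E start T B) (h8 : #T = 8)
    {p : UTask} (hp : p ∈ leftTasks q E start T B) :
    ∃ r ∈ rightTasks q E start T B, taskLen q E p + taskLen q E r = 2 * Aval q E := by
  have := one_le_mu (q := q) (E := E)
  have := Aval_eq (q := q) (E := E)
  have hlen := taskLen_mem_Ioo (hT.valid p (mem_filter.mp hp).1)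
  have hfull := (hT.tight_of_card_eq_eight h8).1
  have h₁ := hT.card_tasksThrough_eq h8 (y := B + taskLen q E p - 1)
    (mem_Ico.mpr ⟨by linarith, by linarith⟩)
  have h₂ := hT.card_tasksThrough_eq h8 (y := B + taskLen q E p)
    (mem_Ico.mpr ⟨by linarith, by linarith⟩)
  rw [hT.card_tasksThrough_eq_four hfull (mem_Ico.mpr ⟨by linarith, by linarith⟩)] at h₁ h₂
  obtain ⟨r, hr, hstart⟩ := exists_eq_of_card_filter_eq (h₁.symm.trans h₂) hp rfl
  exact ⟨r, hr, by linarith [hT.end_eq_of_mem_rightTasks h8 hr]⟩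

lemma snd_eq_true_and_mem_of_mem_leftTasks (hT : BlockFeasible q E start T B)
    (hE : ValidE q E) (h8 : #T = 8) {p : UTask} (hp : p ∈ leftTasks q E start T B) :
    p.2 = true ∧ (p.1, false) ∈ T := by
  obtain ⟨r, hr, hlen⟩ := hT.exists_mem_rightTasks_taskLen_add_eq h8 hp
  have hr2 : r.2 = false := (hT.tight_of_card_eq_eight h8).2.2 r hr
  have hrT : r ∈ T := (mem_filter.mp hr).1
  have hval : taskVal q p = elemVal q r.1 := by
    rw [taskLen_eq, taskLen_eq] at hlen
    simp only [taskVal, hr2, Bool.false_eq_true, if_false] at hlen ⊢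
    linarith
  cases hp2 : p.2
  · simp only [taskVal, hp2, Bool.false_eq_true, if_false] at hval
    exact absurd (by linarith) (elemVal_add_elemVal_ne_zero q p.1 r.1)
  · simp only [taskVal, hp2, if_true] at hval
    have : p.1 = r.1 :=
      elemVal_injOn hE (hT.valid p (mem_filter.mp hp).1) (hT.valid r hrT) hval
    exact ⟨rfl, by rwa [this, ← hr2]⟩

theorem eq_hyperedgeElems_prod (hT : BlockFeasible q E start T B) (hE : ValidE q E)
    (h8 : #T = 8) : ∃ h ∈ E, T = hyperedgeElems h ×ˢ univ := by
  set P := leftTasks q E start T B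
  have hleft : ∀ p ∈ P, p.2 = true ∧ (p.1, false) ∈ T := fun _ hp =>
    hT.snd_eq_true_and_mem_of_mem_leftTasks hE h8 hp
  have hinj : Set.InjOn Prod.fst (P : Set UTask) := fun p hp p' hp' h =>
    Prod.ext h (by rw [(hleft p hp).1, (hleft p' hp').1])
  have hcard : #(P.image Prod.fst) = 4 := by
    rw [card_image_of_injOn hinj, (hT.disjoint_and_card_eq_four h8).2.1]
  have hsum : ∑ u ∈ P.image Prod.fst, elemVal q u = 0 := by
    rw [sum_image hinj, ← (hT.tight_of_card_eq_eight h8).2.1]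
    exact sum_congr rfl fun p hp => by simp [taskVal, (hleft p hp).1]
  obtain ⟨h, hhE, hQ⟩ := exists_eq_hyperedgeElems hE hcard
    (fun u hu => by
      obtain ⟨p, hp, rfl⟩ := mem_image.mp hu
      exact hT.valid p (mem_filter.mp hp).1) hsum
  refine ⟨h, hhE, (eq_of_subset_of_card_le ?_ ?_).symm⟩
  · rintro ⟨u, s⟩ hus
    obtain ⟨p, hp, rfl⟩ := mem_image.mp (hQ ▸ (mem_product.mp hus).1)
    have hpT : (p.1, true) ∈ T := by
      rw [← (hleft p hp).1]; exact (mem_filter.mp hp).1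
    cases s
    exacts [(hleft p hp).2, hpT]
  · rw [h8, card_product, ← hQ, hcard, card_univ, Fintype.card_bool]

end BlockFeasible

end Block

section Path

variable {q : ℕ} {E : Finset (ℕ × ℕ × ℕ)} {S : Finset UTask} {start : UTask → ℤ}

def blockOf (q : ℕ) (E : Finset (ℕ × ℕ × ℕ)) (start : UTask → ℤ) (t : UTask) : ℕ :=
  (start t / (2 * (Aval q E : ℤ) + 1)).toNat

noncomputable def blockTasks (q : ℕ) (E : Finset (ℕ × ℕ × ℕ)) (S : Finset UTask)
    (start : UTask → ℤ) (b : ℕ) : Finset UTask :=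
  {t ∈ S | sched q E start t ⊆ block q E b}

noncomputable def fullBlocks (q : ℕ) (E : Finset (ℕ × ℕ × ℕ)) (S : Finset UTask)
    (start : UTask → ℤ) : Finset ℕ :=
  {b ∈ range q | #(blockTasks q E S start b) = 8}

lemma cap_blockStart_add (b : ℕ) {r : ℤ} (h0 : 0 ≤ r) (hr : r < 2 * Aval q E + 1) :
    cap q E (blockStart q E b + r) =
      if r < Aval q E then 4 * (Aval q E : ℤ) + 4
      else if r < 2 * Aval q E then 4 * (Aval q E : ℤ) else 0 := by
  rw [cap, blockStart, add_comm, Int.add_mul_emod_self_right, Int.emod_eq_of_lt h0 hr]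

lemma ediv_eq_of_mem_block {b : ℕ} {e : ℤ} (he : e ∈ block q E b) :
    e / (2 * Aval q E + 1) = b := by
  rw [block, blockStart, mem_Ico] at he
  exact (Int.ediv_eq_iff_of_pos (by positivity)).mpr ⟨he.1, by linarith⟩

lemma mem_edges_of_mem_block {b : ℕ} (hb : b < q) {e : ℤ} (he : e ∈ block q E b) :
    0 ≤ e ∧ e < numEdges q E := by
  rw [block, blockStart, mem_Ico] at he
  have hb' : (b : ℤ) + 1 ≤ q := by exact_mod_cast hb
  have hmul := mul_le_mul_of_nonneg_left hb' (by positivity : (0 : ℤ) ≤ 2 * Aval q E + 1)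
  constructor <;> [nlinarith; (rw [numEdges]; nlinarith)]

lemma blockOf_eq_of_sched_subset {t : UTask} (ht : validElem q E t.1) {b : ℕ}
    (h : sched q E start t ⊆ block q E b) : blockOf q E start t = b := by
  have hlen := (taskLen_mem_Ioo ht).1
  have := Aval_eq (q := q) (E := E)
  have hstart : start t ∈ block q E b := h (by rw [sched, left_mem_Ico]; linarith)
  rw [blockOf, ediv_eq_of_mem_block hstart, Int.toNat_natCast]

namespace Feasible

/-- No task can cross the capacity-`0` edge closing its first block. -/
lemma sched_subset_block_blockOf (hfeas : Feasible q E S start) {t : UTask} (ht : t ∈ S) :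
    sched q E start t ⊆ block q E (blockOf q E start t) := by
  obtain ⟨hval, hrange, hload⟩ := hfeas
  set W : ℤ := 2 * Aval q E + 1 with hWdef
  have hW : 0 < W := by positivity
  have hd0 : 0 ≤ start t / W := Int.ediv_nonneg (hrange t ht).1 hW.le
  have hlo := Int.ediv_mul_le (start t) hW.ne'
  have hhi := Int.lt_ediv_add_one_mul_self (start t) hW
  have hbs : blockStart q E (blockOf q E start t) = start t / W * W := by
    rw [blockStart, blockOf, Int.toNat_of_nonneg hd0]
  have hlen := (taskLen_mem_Ioo (hval t ht)).1
  have := Aval_eq (q := q) (E := E)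
  rw [block, hbs, sched, Ico_subset_Ico_iff (by linarith)]
  refine ⟨hlo, ?_⟩
  by_contra! hcross
  set sep := start t / W * W + 2 * Aval q E
  have hcap : cap q E sep = 0 := by
    have := cap_blockStart_add (q := q) (E := E) (blockOf q E start t) (r := 2 * Aval q E)
      (by positivity) (by linarith)
    rwa [hbs, if_neg (by linarith), if_neg (by linarith)] at this
  have hsep := hload sep (by nlinarith) (by linarith [(hrange t ht).2])
  rw [hcap] at hsep
  have hmem : t ∈ S.filter fun t' => sep ∈ sched q E start t' :=
    mem_filter.mpr ⟨ht, by rw [sched, mem_Ico]; constructor <;> linarith⟩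
  have := single_le_sum (fun t' ht' => (taskDem_pos (hval t' (mem_filter.mp ht').1)).le) hmem
  linarith [taskDem_pos (hval t ht)]

lemma blockOf_lt (hfeas : Feasible q E S start) {t : UTask} (ht : t ∈ S) :
    blockOf q E start t < q := by
  have hlen := (taskLen_mem_Ioo (hfeas.1 t ht)).1
  have := Aval_eq (q := q) (E := E)
  have hend := (hfeas.2.1 t ht).2
  rw [numEdges] at hend
  have hlt : start t / (2 * Aval q E + 1) < q :=
    Int.ediv_lt_of_lt_mul (by positivity) (by linarith)
  have hd0 : 0 ≤ start t / (2 * Aval q E + 1) :=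
    Int.ediv_nonneg (hfeas.2.1 t ht).1 (by positivity)
  rw [blockOf]
  omega

lemma mem_blockTasks_iff (hfeas : Feasible q E S start) {t : UTask} (ht : t ∈ S) {b : ℕ} :
    t ∈ blockTasks q E S start b ↔ blockOf q E start t = b := by
  rw [blockTasks, mem_filter]
  constructor
  · exact fun h => blockOf_eq_of_sched_subset (hfeas.1 t ht) h.2
  · rintro rfl
    exact ⟨ht, hfeas.sched_subset_block_blockOf ht⟩

lemma eq_of_mem_blockTasks (hfeas : Feasible q E S start) {t : UTask} {b b' : ℕ}
    (h : t ∈ blockTasks q E S start b) (h' : t ∈ blockTasks q E S start b') : b = b' := by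
  have ht := (mem_filter.mp h).1
  rw [← (hfeas.mem_blockTasks_iff ht).mp h, ← (hfeas.mem_blockTasks_iff ht).mp h']

lemma card_eq_sum_card_blockTasks (hfeas : Feasible q E S start) :
    #S = ∑ b ∈ range q, #(blockTasks q E S start b) := by
  rw [card_eq_sum_card_fiberwise fun t ht => mem_range.mpr (hfeas.blockOf_lt ht)]
  refine sum_congr rfl fun b _ => congrArg card ?_
  ext t
  rw [mem_filter]
  exact ⟨fun h => (hfeas.mem_blockTasks_iff h.1).mpr h.2,
    fun h => ⟨(mem_filter.mp h).1, (hfeas.mem_blockTasks_iff (mem_filter.mp h).1).mp h⟩⟩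

lemma blockFeasible (hfeas : Feasible q E S start) {b : ℕ} (hb : b < q) :
    BlockFeasible q E start (blockTasks q E S start b) (blockStart q E b) where
  valid t ht := hfeas.1 t (mem_filter.mp ht).1
  sched_subset t ht := (mem_filter.mp ht).2
  load_le e he := by
    obtain ⟨he0, heN⟩ := mem_edges_of_mem_block hb he
    have hcap := cap_blockStart_add (q := q) (E := E) b (r := e - blockStart q E b)
      (by linarith [(mem_Ico.mp he).1]) (by linarith [(mem_Ico.mp he).2])
    rw [add_sub_cancel] at hcap
    refine (sum_le_sum_of_subset_of_nonneg ?_ ?_).trans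
      ((hfeas.2.2 e he0 heN).trans (le_of_eq ?_))
    · exact filter_subset_filter _ (filter_subset _ _)
    · exact fun t ht _ => (taskDem_pos (hfeas.1 t (mem_filter.mp ht).1)).le
    · have := (mem_Ico.mp he).2
      rw [hcap]
      split_ifs <;> first | rfl | omega

lemma le_card_fullBlocks (hfeas : Feasible q E S start) {p : ℕ} (hcard : #S = p + 7 * q) :
    p ≤ #(fullBlocks q E S start) := by
  have : ∑ b ∈ range q, #(blockTasks q E S start b) ≤ 7 * #(range q) + #(fullBlocks q E S start) :=
    sum_le_mul_card_add_card_filter_eq fun b hb =>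
      (hfeas.blockFeasible (mem_range.mp hb)).card_le_eight
  rw [← hfeas.card_eq_sum_card_blockTasks, card_range, hcard] at this
  omega

lemma exists_blockTasks_eq (hfeas : Feasible q E S start) (hE : ValidE q E) {b : ℕ}
    (hb : b ∈ fullBlocks q E S start) :
    ∃ h ∈ E, blockTasks q E S start b = hyperedgeElems h ×ˢ univ :=
  (hfeas.blockFeasible (mem_range.mp (mem_filter.mp hb).1)).eq_hyperedgeElems_prod hE
    (mem_filter.mp hb).2

lemma blockTasks_eq_of_mem (hfeas : Feasible q E S start) (hE : ValidE q E) {b : ℕ}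
    (hb : b ∈ fullBlocks q E S start) {h : ℕ × ℕ × ℕ}
    (hH : (Elem.H h, true) ∈ blockTasks q E S start b) :
    blockTasks q E S start b = hyperedgeElems h ×ˢ univ := by
  obtain ⟨h₀, -, hT⟩ := hfeas.exists_blockTasks_eq hE hb
  rw [hT] at hH ⊢
  simp [hyperedgeElems] at hH
  rw [hH]

/-- Two hyperedges each filling a block share a node only if they fill the same block. -/
lemma matching (hfeas : Feasible q E S start) (hE : ValidE q E) {M : Finset (ℕ × ℕ × ℕ)}
    (hM : ∀ h ∈ M, ∃ b ∈ fullBlocks q E S start, (Elem.H h, true) ∈ blockTasks q E S start b) :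
    Matching M := by
  intro h hh h' hh' hne
  obtain ⟨b, hb, hH⟩ := hM h hh
  obtain ⟨b', hb', hH'⟩ := hM h' hh'
  have hT := hfeas.blockTasks_eq_of_mem hE hb hH
  have hT' := hfeas.blockTasks_eq_of_mem hE hb' hH'
  have hdisj : ∀ u ∈ hyperedgeElems h, u ∉ hyperedgeElems h' := by
    intro u hu hu'
    have hbb : b = b' := hfeas.eq_of_mem_blockTasks (t := (u, true))
      (by rw [hT]; exact mem_product.mpr ⟨hu, mem_univ _⟩)
      (by rw [hT']; exact mem_product.mpr ⟨hu', mem_univ _⟩)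
    subst hbb
    have := hT ▸ hH'
    simp [hyperedgeElems] at this
    exact hne this.symm
  refine ⟨fun h1 => hdisj (.X h.1) ?_ ?_, fun h2 => hdisj (.Y h.2.1) ?_ ?_,
    fun h3 => hdisj (.Z h.2.2) ?_ ?_⟩ <;> simp [hyperedgeElems, *]

/-- Each full block carries a hyperedge, which determines the block. -/
lemma card_fullBlocks_le (hfeas : Feasible q E S start) (hE : ValidE q E)
    {M : Finset (ℕ × ℕ × ℕ)} (hM : ∀ h ∈ E, ∀ b ∈ fullBlocks q E S start,
      (Elem.H h, true) ∈ blockTasks q E S start b → (Elem.H h, false) ∈ blockTasks q E S start b →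
      h ∈ M) :
    #(fullBlocks q E S start) ≤ #M := by
  refine (card_le_card fun b hb => ?_).trans
    (card_image_le (s := M) (f := fun h => blockOf q E start (.H h, true)))
  obtain ⟨h, hhE, hT⟩ := hfeas.exists_blockTasks_eq hE hb
  have hH (s : Bool) : (Elem.H h, s) ∈ blockTasks q E S start b := by
    rw [hT]; simp [hyperedgeElems]
  refine mem_image.mpr ⟨h, hM h hhE b hb (hH true) (hH false), ?_⟩
  exact (hfeas.mem_blockTasks_iff (mem_filter.mp (hH true)).1).mp (hH true)

end Feasible

end Path

/-- If `σ(K)` has a feasible solution consisting of `p + 7q` tasks, then `K` has a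
hypermatching of size at least `p`; concretely, the set `M` of hyperedges `h_ℓ ∈ E` such that
both `t_L(h_ℓ)` and `t_R(h_ℓ)` are scheduled inside a block containing exactly 8 scheduled
tasks is a hypermatching of size at least `p`. -/
theorem schedule_to_matching (q : ℕ) (E : Finset (ℕ × ℕ × ℕ)) (hE : ValidE q E)
    (S : Finset UTask) (start : UTask → ℤ) (hfeas : Feasible q E S start)
    (p : ℕ) (hcard : S.card = p + 7 * q) :
    ∃ M ⊆ E, Matching M ∧ p ≤ M.card ∧
      ∀ h : ℕ × ℕ × ℕ, h ∈ M ↔ h ∈ E ∧ ∃ b < q,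
        (S.filter (fun t => sched q E start t ⊆ block q E b)).card = 8 ∧
        (Elem.H h, true) ∈ S ∧ sched q E start (Elem.H h, true) ⊆ block q E b ∧
        (Elem.H h, false) ∈ S ∧ sched q E start (Elem.H h, false) ⊆ block q E b := by
  set M := E.filter fun h => ∃ b ∈ fullBlocks q E S start,
    (Elem.H h, true) ∈ blockTasks q E S start b ∧ (Elem.H h, false) ∈ blockTasks q E S start b
  have hmem (h : ℕ × ℕ × ℕ) : h ∈ M ↔ h ∈ E ∧ ∃ b ∈ fullBlocks q E S start,
      (Elem.H h, true) ∈ blockTasks q E S start b ∧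
      (Elem.H h, false) ∈ blockTasks q E S start b :=
    mem_filter
  refine ⟨M, filter_subset _ _, hfeas.matching hE fun h hh => ?_,
    (hfeas.le_card_fullBlocks hcard).trans
      (hfeas.card_fullBlocks_le hE fun h hhE b hb hH hH' => (hmem h).mpr ⟨hhE, b, hb, hH, hH'⟩),
    fun h => ?_⟩
  · obtain ⟨-, b, hb, hH, -⟩ := (hmem h).mp hh
    exact ⟨b, hb, hH⟩
  · simp only [hmem, fullBlocks, mem_filter, mem_range, and_assoc]
    simp only [blockTasks, mem_filter, and_assoc]
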